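/- For every y ∈ [0,2) ∩ ℤ[φ] there exists n ≥ 0 such that Rⁿ(y) belongs to the eight-element set {0, 1, 2−φ, φ, φ−1, 3φ−3, 3−φ, 5−3φ}. Moreover this set decomposes into periodic cycles of R: R(0) = 0, R(1) = 1, R(2−φ) = φ, R(φ) = 2−φ, and R(φ−1) = 3φ−3, R(3φ−3) = 3−φ, R(3−φ) = 5−3φ, R(5−3φ) = φ−1. -/

import Mathlib

/-!
On each of its five intervals `R` is an affine map `y ↦ φ³y + t` or a translation `y ↦ y + t` with
`t ∈ ℤ[φ]`, and after a translation the orbit always takes an expanding branch next. So within one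
or two steps every orbit applies exactly one factor `φ³`. Under the Galois conjugation `φ ↦ ψ`
that factor becomes `ψ³`, with `|ψ³| = φ⁻³`, while the accumulated translations have conjugates of
absolute value at most `2φ`. Hence `|conjugate|` along the orbit drops by a fixed amount as long as
it is at least `2√5 = 4φ - 2`. Once it is smaller, `(m + nφ) - (m + nψ) = n√5` and `0 ≤ m + nφ < 2`
leave only eight points of `ℤ[φ]`: six lie on the two cycles, and `2φ - 3 ↦ 1`, `2φ - 2 ↦ 0`.
-/

open Set

noncomputable section

/-- The golden ratio `(1+√5)/2`. -/
def gold : ℝ := (1 + Real.sqrt 5) / 2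

/-- The ring `ℤ[φ]`. -/
def Zgold : Set ℝ := {x | ∃ m n : ℤ, x = m + n * gold}

/-- The renormalization map `R` on `[0,2)`. -/
def Rmap (y : ℝ) : ℝ :=
  if y < 2 - gold then gold ^ 3 * y
  else if y < 4 - 2 * gold then y + 2 * gold - 2
  else if y < 2 * gold - 2 then gold ^ 3 * y - 2 * gold
  else if y < gold then y - 2 * gold + 2
  else gold ^ 3 * y - 4 * gold

open Real goldenRatio

-- `P x v` reads: the potential of `x` is at most `v`.
theorem exists_iterate_mem_of_descent {α : Type*} {f : α → α} {T : Set α} {P : α → ℝ → Prop}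
    {b δ : ℝ} (hδ : 0 < δ) (hbase : ∀ x v, P x v → v < b → ∃ j, f^[j] x ∈ T)
    (hstep : ∀ x v, P x v → b ≤ v → ∃ j, P (f^[j] x) (v - δ)) {x : α} {v : ℝ} (hx : P x v) :
    ∃ j, f^[j] x ∈ T := by
  obtain ⟨N, hN⟩ := exists_nat_gt ((v - b) / δ)
  induction N generalizing x v with
  | zero =>
    refine hbase x v hx ?_
    rw [Nat.cast_zero, div_lt_iff₀ hδ] at hN
    linarith
  | succ N ih =>
    rcases lt_or_ge v b with hv | hv
    · exact hbase x v hx hv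
    obtain ⟨j, hj⟩ := hstep x v hx hv
    obtain ⟨k, hk⟩ := ih hj (by rw [div_lt_iff₀ hδ] at hN ⊢; push_cast at hN; linarith)
    exact ⟨k + j, by rwa [Function.iterate_add_apply]⟩

theorem gold_eq_goldenRatio : gold = φ := rfl

theorem goldenRatio_cube : φ ^ 3 = 2 * φ + 1 := by
  linear_combination (φ + 1) * goldenRatio_sq

theorem goldenConj_cube : ψ ^ 3 = 2 * ψ + 1 := by
  linear_combination (ψ + 1) * goldenConj_sq

theorem abs_goldenConj_cube : |ψ ^ 3| = 2 * φ - 3 := by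
  rw [abs_of_neg (Odd.pow_neg (by decide) goldenConj_neg), goldenConj_cube,
    ← one_sub_goldenConj]
  ring

theorem goldenRatio_gt_d2 : 1.61 < φ := by
  have : (222 / 100 : ℝ) < √5 := by rw [Real.lt_sqrt (by norm_num)]; norm_num
  rw [goldenRatio]
  linarith

theorem goldenRatio_lt_d2 : φ < 1.62 := by
  have : √5 < 224 / 100 := by rw [Real.sqrt_lt' (by norm_num)]; norm_num
  rw [goldenRatio]
  linarith

theorem Rmap_def (y : ℝ) :
    Rmap y =
      if y < 2 - φ then φ ^ 3 * y
      else if y < 4 - 2 * φ then y + 2 * φ - 2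
      else if y < 2 * φ - 2 then φ ^ 3 * y - 2 * φ
      else if y < φ then y - 2 * φ + 2
      else φ ^ 3 * y - 4 * φ :=
  rfl

section Branches

variable {y : ℝ}

theorem Rmap_of_lt_two_sub_goldenRatio (h : y < 2 - φ) : Rmap y = φ ^ 3 * y := by
  rw [Rmap_def, if_pos h]

theorem Rmap_of_mem_Ico_two_sub_goldenRatio (h : y ∈ Ico (2 - φ) (4 - 2 * φ)) :
    Rmap y = y + 2 * φ - 2 := by
  rw [Rmap_def, if_neg h.1.not_gt, if_pos h.2]

theorem Rmap_of_mem_Ico_four_sub_two_mul_goldenRatio (h : y ∈ Ico (4 - 2 * φ) (2 * φ - 2)) :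
    Rmap y = φ ^ 3 * y - 2 * φ := by
  have := goldenRatio_lt_two
  rw [Rmap_def, if_neg (by linarith [h.1]), if_neg h.1.not_gt, if_pos h.2]

theorem Rmap_of_mem_Ico_two_mul_goldenRatio_sub_two (h : y ∈ Ico (2 * φ - 2) φ) :
    Rmap y = y - 2 * φ + 2 := by
  have := goldenRatio_gt_d2
  rw [Rmap_def, if_neg (by linarith [h.1]), if_neg (by linarith [h.1]), if_neg h.1.not_gt,
    if_pos h.2]

theorem Rmap_of_goldenRatio_le (h : φ ≤ y) : Rmap y = φ ^ 3 * y - 4 * φ := by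
  have := goldenRatio_gt_d2
  have := goldenRatio_lt_two
  rw [Rmap_def, if_neg (by linarith), if_neg (by linarith), if_neg (by linarith),
    if_neg h.not_gt]

end Branches

theorem mapsTo_Rmap : MapsTo Rmap (Ico 0 2) (Ico 0 2) := by
  rintro y ⟨h₀, h₂⟩
  have := goldenRatio_cube
  have := goldenRatio_sq
  have := goldenRatio_gt_d2
  have := goldenRatio_lt_d2
  rcases lt_or_ge y (2 - φ) with h₁ | h₁
  · rw [Rmap_of_lt_two_sub_goldenRatio h₁]
    constructor <;> nlinarith
  rcases lt_or_ge y (4 - 2 * φ) with h₃ | h₃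
  · rw [Rmap_of_mem_Ico_two_sub_goldenRatio ⟨h₁, h₃⟩]
    constructor <;> linarith
  rcases lt_or_ge y (2 * φ - 2) with h₄ | h₄
  · rw [Rmap_of_mem_Ico_four_sub_two_mul_goldenRatio ⟨h₃, h₄⟩]
    constructor <;> nlinarith
  rcases lt_or_ge y φ with h₅ | h₅
  · rw [Rmap_of_mem_Ico_two_mul_goldenRatio_sub_two ⟨h₄, h₅⟩]
    constructor <;> linarith
  · rw [Rmap_of_goldenRatio_le h₅]
    constructor <;> nlinarith

theorem Rmap_zero : Rmap 0 = 0 := by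
  rw [Rmap_of_lt_two_sub_goldenRatio (by linarith [goldenRatio_lt_two])]
  ring

theorem Rmap_one : Rmap 1 = 1 := by
  have := goldenRatio_gt_d2
  have := goldenRatio_lt_d2
  rw [Rmap_of_mem_Ico_four_sub_two_mul_goldenRatio ⟨by linarith, by linarith⟩, goldenRatio_cube]
  ring

theorem Rmap_two_sub_goldenRatio : Rmap (2 - φ) = φ := by
  rw [Rmap_of_mem_Ico_two_sub_goldenRatio ⟨le_rfl, by linarith [goldenRatio_lt_two]⟩]
  ring

theorem Rmap_goldenRatio : Rmap φ = 2 - φ := by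
  rw [Rmap_of_goldenRatio_le le_rfl]
  linear_combination φ * goldenRatio_cube + 2 * goldenRatio_sq

theorem Rmap_goldenRatio_sub_one : Rmap (φ - 1) = 3 * φ - 3 := by
  have := goldenRatio_gt_d2
  have := goldenRatio_lt_d2
  rw [Rmap_of_mem_Ico_two_sub_goldenRatio ⟨by linarith, by linarith⟩]
  ring

theorem Rmap_three_mul_goldenRatio_sub_three : Rmap (3 * φ - 3) = 3 - φ := by
  rw [Rmap_of_goldenRatio_le (by linarith [goldenRatio_gt_d2])]
  linear_combination 3 * φ * goldenRatio_cube - 3 * goldenRatio_cube + 6 * goldenRatio_sq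

theorem Rmap_three_sub_goldenRatio : Rmap (3 - φ) = 5 - 3 * φ := by
  have := goldenRatio_gt_d2
  have := goldenRatio_lt_d2
  rw [Rmap_of_mem_Ico_two_mul_goldenRatio_sub_two ⟨by linarith, by linarith⟩]
  ring

theorem Rmap_five_sub_three_mul_goldenRatio : Rmap (5 - 3 * φ) = φ - 1 := by
  rw [Rmap_of_lt_two_sub_goldenRatio (by linarith [goldenRatio_gt_d2])]
  linear_combination (5 - 3 * φ) * goldenRatio_cube - 6 * goldenRatio_sq

theorem Rmap_two_mul_goldenRatio_sub_three : Rmap (2 * φ - 3) = 1 := by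
  rw [Rmap_of_lt_two_sub_goldenRatio (by linarith [goldenRatio_lt_d2])]
  linear_combination (2 * φ - 3) * goldenRatio_cube + 4 * goldenRatio_sq

theorem Rmap_two_mul_goldenRatio_sub_two : Rmap (2 * φ - 2) = 0 := by
  rw [Rmap_of_mem_Ico_two_mul_goldenRatio_sub_two ⟨le_rfl, by linarith [goldenRatio_lt_two]⟩]
  ring

theorem exists_iterate_Rmap_eq_goldenRatio_cube_mul_add (y : ℝ) :
    ∃ (j : ℕ) (a b : ℤ), Rmap^[j] y = φ ^ 3 * y + (a + b * φ) ∧ |a + b * ψ| ≤ 2 * φ := by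
  have := goldenRatio_gt_d2
  have := goldenRatio_lt_d2
  rw [← one_sub_goldenConj]
  rcases lt_or_ge y (2 - φ) with h₁ | h₁
  · refine ⟨1, 0, 0, ?_, ?_⟩
    · rw [Function.iterate_one, Rmap_of_lt_two_sub_goldenRatio h₁]
      push_cast; ring
    · rw [abs_le]; push_cast; constructor <;> linarith
  rcases lt_or_ge y (4 - 2 * φ) with h₃ | h₃
  · refine ⟨2, 2, -2, ?_, ?_⟩
    · rw [Function.iterate_succ_apply', Function.iterate_one,
        Rmap_of_mem_Ico_two_sub_goldenRatio ⟨h₁, h₃⟩, Rmap_of_goldenRatio_le (by linarith)]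
      push_cast
      linear_combination 2 * (φ - 1) * goldenRatio_cube + 4 * goldenRatio_sq
    · rw [abs_le]; push_cast; constructor <;> linarith
  rcases lt_or_ge y (2 * φ - 2) with h₄ | h₄
  · refine ⟨1, 0, -2, ?_, ?_⟩
    · rw [Function.iterate_one, Rmap_of_mem_Ico_four_sub_two_mul_goldenRatio ⟨h₃, h₄⟩]
      push_cast; ring
    · rw [abs_le]; push_cast; constructor <;> linarith
  rcases lt_or_ge y φ with h₅ | h₅
  · refine ⟨2, -2, -2, ?_, ?_⟩
    · rw [Function.iterate_succ_apply', Function.iterate_one,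
        Rmap_of_mem_Ico_two_mul_goldenRatio_sub_two ⟨h₄, h₅⟩,
        Rmap_of_lt_two_sub_goldenRatio (by linarith)]
      push_cast
      linear_combination -2 * (φ - 1) * goldenRatio_cube - 4 * goldenRatio_sq
    · rw [abs_le]; push_cast; constructor <;> linarith
  · refine ⟨1, 0, -4, ?_, ?_⟩
    · rw [Function.iterate_one, Rmap_of_goldenRatio_le h₅]
      push_cast; ring
    · rw [abs_le]; push_cast; constructor <;> linarith

def IsGoldenConj (y c : ℝ) : Prop := ∃ m n : ℤ, y = m + n * φ ∧ c = m + n * ψ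

theorem isGoldenConj_intCast_add_mul (a b : ℤ) : IsGoldenConj (a + b * φ) (a + b * ψ) :=
  ⟨a, b, rfl, rfl⟩

namespace IsGoldenConj

variable {y c y' c' : ℝ}

theorem add (h : IsGoldenConj y c) (h' : IsGoldenConj y' c') : IsGoldenConj (y + y') (c + c') := by
  obtain ⟨m, n, rfl, rfl⟩ := h
  obtain ⟨m', n', rfl, rfl⟩ := h'
  exact ⟨m + m', n + n', by push_cast; ring, by push_cast; ring⟩

theorem mul (h : IsGoldenConj y c) (h' : IsGoldenConj y' c') : IsGoldenConj (y * y') (c * c') := by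
  obtain ⟨m, n, rfl, rfl⟩ := h
  obtain ⟨m', n', rfl, rfl⟩ := h'
  refine ⟨m * m' + n * n', m * n' + m' * n + n * n', ?_, ?_⟩
  · push_cast; linear_combination (n * n' : ℝ) * goldenRatio_sq
  · push_cast; linear_combination (n * n' : ℝ) * goldenConj_sq

theorem goldenRatio_cube_mul_add (h : IsGoldenConj y c) (a b : ℤ) :
    IsGoldenConj (φ ^ 3 * y + (a + b * φ)) (ψ ^ 3 * c + (a + b * ψ)) := by
  rw [goldenRatio_cube, goldenConj_cube]
  convert ((isGoldenConj_intCast_add_mul 1 2).mul h).add (isGoldenConj_intCast_add_mul a b)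
    using 3 <;> push_cast <;> ring

end IsGoldenConj

def rmapCyclePts : Set ℝ := {0, 1, 2 - φ, φ, φ - 1, 3 * φ - 3, 3 - φ, 5 - 3 * φ}

theorem mem_rmapCyclePts_of_isGoldenConj_of_abs_lt {y c : ℝ} (hy : y ∈ Ico 0 2)
    (h : IsGoldenConj y c) (hc : |c| < 4 * φ - 2) :
    y ∈ rmapCyclePts ∨ y = 2 * φ - 3 ∨ y = 2 * φ - 2 := by
  obtain ⟨m, n, rfl, rfl⟩ := h
  obtain ⟨hy₀, hy₂⟩ := hy
  rw [abs_lt, ← one_sub_goldenConj] at hc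
  have := goldenRatio_gt_d2
  have := goldenRatio_lt_d2
  have hn₁ : -2 < n := by
    by_contra! hn
    have : (n : ℝ) ≤ -2 := by exact_mod_cast hn
    nlinarith
  have hn₂ : n < 3 := by
    by_contra! hn
    have : (3 : ℝ) ≤ n := by exact_mod_cast hn
    nlinarith
  have hm₁ : -4 < m := by
    have : (-1 : ℝ) ≤ n := by exact_mod_cast hn₁
    have : (-4 : ℝ) < m := by nlinarith
    exact_mod_cast this
  have hm₂ : m < 4 := by
    have : (n : ℝ) ≤ 2 := by exact_mod_cast (show n ≤ 2 by omega)
    have : (m : ℝ) < 4 := by nlinarith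
    exact_mod_cast this
  simp only [rmapCyclePts, mem_insert_iff, mem_singleton_iff]
  interval_cases n <;> interval_cases m <;> push_cast at hy₀ hy₂ ⊢ <;>
    first | (exfalso; linarith) | (ring_nf; tauto)

theorem exists_iterate_Rmap_mem_of_isGoldenConj {y c : ℝ} (hy : y ∈ Ico 0 2)
    (h : IsGoldenConj y c) :
    ∃ k, Rmap^[k] y ∈ rmapCyclePts := by
  refine exists_iterate_mem_of_descent
    (P := fun y v ↦ y ∈ Ico 0 2 ∧ ∃ c, IsGoldenConj y c ∧ |c| ≤ v) (b := 4 * φ - 2)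
    (δ := 1 / 10) (by norm_num) ?_ ?_ ⟨hy, c, h, le_rfl⟩
  · rintro y v ⟨hy, c, h, hcv⟩ hvb
    rcases mem_rmapCyclePts_of_isGoldenConj_of_abs_lt hy h (hcv.trans_lt hvb) with hy | rfl | rfl
    · exact ⟨0, hy⟩
    · refine ⟨1, ?_⟩
      rw [Function.iterate_one, Rmap_two_mul_goldenRatio_sub_three]
      simp [rmapCyclePts]
    · refine ⟨1, ?_⟩
      rw [Function.iterate_one, Rmap_two_mul_goldenRatio_sub_two]
      simp [rmapCyclePts]
  · rintro y v ⟨hy, c, h, hcv⟩ hbv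
    obtain ⟨j, a, b, hj, hab⟩ := exists_iterate_Rmap_eq_goldenRatio_cube_mul_add y
    refine ⟨j, mapsTo_Rmap.iterate j hy, _, by rw [hj]; exact h.goldenRatio_cube_mul_add a b, ?_⟩
    have := goldenRatio_gt_d2
    have := goldenRatio_lt_d2
    calc |ψ ^ 3 * c + (a + b * ψ)| ≤ |ψ ^ 3| * |c| + |a + b * ψ| := by
          rw [← abs_mul]; exact abs_add_le _ _
      _ ≤ (2 * φ - 3) * v + 2 * φ := by
          rw [abs_goldenConj_cube]; gcongr; linarith
      -- at `v = 4φ - 2` the drop is `(4 - 2φ)(4φ - 2) - 2φ = 10φ - 16 > 1/10`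
      _ ≤ v - 1 / 10 := by nlinarith [goldenRatio_sq]

/-- Descent Lemma I: every point of `ℤ[φ] ∩ [0,2)` eventually lands in the eight-element
set of `R`-periodic points, and that set decomposes into the indicated cycles. -/
theorem descent_lemma_I :
    (∀ y ∈ Set.Ico (0 : ℝ) 2, y ∈ Zgold → ∃ k : ℕ,
      Rmap^[k] y ∈ ({0, 1, 2 - gold, gold, gold - 1, 3 * gold - 3, 3 - gold, 5 - 3 * gold} : Set ℝ)) ∧
    Rmap 0 = 0 ∧ Rmap 1 = 1 ∧
    Rmap (2 - gold) = gold ∧ Rmap gold = 2 - gold ∧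
    Rmap (gold - 1) = 3 * gold - 3 ∧ Rmap (3 * gold - 3) = 3 - gold ∧
    Rmap (3 - gold) = 5 - 3 * gold ∧ Rmap (5 - 3 * gold) = gold - 1 := by
  rw [gold_eq_goldenRatio]
  exact ⟨fun y hy ⟨m, n, hmn⟩ ↦ exists_iterate_Rmap_mem_of_isGoldenConj hy ⟨m, n, hmn, rfl⟩,
    Rmap_zero, Rmap_one, Rmap_two_sub_goldenRatio, Rmap_goldenRatio, Rmap_goldenRatio_sub_one,
    Rmap_three_mul_goldenRatio_sub_three, Rmap_three_sub_goldenRatio,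
    Rmap_five_sub_three_mul_goldenRatio⟩
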